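/- If λ₂ = 0, then the minimum of Δ_λ(f) over all f ∈ 𝓛(P_{X|S=0}) equals −λ₄·ρ_m·√(Var[log(P_{Y|S=0}(Y)/P_{Y|S=1}(Y)) | S=0]), where Var[·|S=0] denotes the variance under the conditional distribution given S=0. -/

import Mathlib

/-! For a direction `v` with `∑ v = 0`, the map `ε ↦ KL(P + εv ‖ Q)` has derivative
`∑ v log (P / Q)` at `0`, which vanishes for `Q = P`. With `λ₂ = 0` only the `λ₄` term of `Δ_λ(f)`
survives, and since `𝒴` is binary it equals `λ₄ (ℓ(0) − ℓ(1)) E[f(X) h(X)]` with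
`ℓ = log (P_{Y|S=0} / P_{Y|S=1})` and `h(x) = p − W(1|x)`, a mean-zero function. By Cauchy–Schwarz
the minimum over unit-variance mean-zero `f` is `−λ₄ |ℓ(0) − ℓ(1)| ‖h‖`, attained at `f = ±h / ‖h‖`.
Finally `E[g_m(Y) | X] = h(X) / √(p(1 − p))` and `Var ℓ(Y) = p(1 − p)(ℓ(0) − ℓ(1))²`, so this
value is `−λ₄ ρ_m √(Var ℓ(Y))`. -/

open Filter Topology

noncomputable def KLdiv {α : Type*} [Fintype α] (P Q : α → ℝ) : ℝ :=
  ∑ a, P a * Real.log (P a / Q a)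

/-- The objective `L_λ` evaluated at the perturbed distribution
`P̃_{X|S=0}(x) = P0(x)(1+εf(x))`, with `P̃_{Y|S=0} = W ∘ P̃_{X|S=0}`.
At `ε = 0` this is `L_λ(P_{X|S=0})`. -/
noncomputable def Lobj {𝒳 : Type*} [Fintype 𝒳]
    (P0 P1 : 𝒳 → ℝ) (W : 𝒳 → Bool → ℝ) (Q0 Q1 : Bool → ℝ)
    (l1 l2 l3 l4 : ℝ) (f : 𝒳 → ℝ) (ε : ℝ) : ℝ :=
  l1 * KLdiv (fun x => P0 x * (1 + ε * f x)) P0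
    + l2 * KLdiv (fun x => P0 x * (1 + ε * f x)) P1
    + l3 * KLdiv (fun y => ∑ x, P0 x * (1 + ε * f x) * W x y) Q0
    + l4 * KLdiv (fun y => ∑ x, P0 x * (1 + ε * f x) * W x y) Q1

open Real Finset

lemma hasDerivAt_add_mul_mul_log_div (a b c : ℝ) (ha : 0 < a) (hc : 0 < c) :
    HasDerivAt (fun ε : ℝ => (a + ε * b) * log ((a + ε * b) / c))
      (b * log (a / c) + b) 0 := by
  have hu : HasDerivAt (fun ε : ℝ => a + ε * b) b 0 := by
    simpa using ((hasDerivAt_id (0 : ℝ)).mul_const b).const_add a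
  have hlog : HasDerivAt (fun ε : ℝ => log ((a + ε * b) / c)) ((b / c) / ((a + 0 * b) / c)) 0 :=
    (hu.div_const c).log (by simp only [zero_mul, add_zero]; positivity)
  refine (hu.fun_mul hlog).congr_deriv ?_
  rw [zero_mul, add_zero]
  field_simp

lemma hasDerivAt_KLdiv_add_mul {α : Type*} [Fintype α] (P Q v : α → ℝ)
    (hP : ∀ a, 0 < P a) (hQ : ∀ a, 0 < Q a) (hv : ∑ a, v a = 0) :
    HasDerivAt (fun ε => KLdiv (fun a => P a + ε * v a) Q) (∑ a, v a * log (P a / Q a)) 0 := by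
  have h := HasDerivAt.fun_sum (u := univ) fun a _ =>
    hasDerivAt_add_mul_mul_log_div (P a) (v a) (Q a) (hP a) (hQ a)
  rwa [sum_add_distrib, hv, add_zero] at h

lemma hasDerivAt_KLdiv_self_add_mul {α : Type*} [Fintype α] (P v : α → ℝ)
    (hP : ∀ a, 0 < P a) (hv : ∑ a, v a = 0) :
    HasDerivAt (fun ε => KLdiv (fun a => P a + ε * v a) P) 0 0 := by
  convert hasDerivAt_KLdiv_add_mul P P v hP hP hv using 1
  simp [div_self (hP _).ne']

lemma sq_sum_mul_mul_le {ι : Type*} (s : Finset ι) (P f h : ι → ℝ) (hP : ∀ i, 0 ≤ P i) :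
    (∑ i ∈ s, P i * f i * h i) ^ 2 ≤ (∑ i ∈ s, P i * f i ^ 2) * ∑ i ∈ s, P i * h i ^ 2 :=
  sum_sq_le_sum_mul_sum_of_sq_le_mul s (fun i _ => mul_nonneg (hP i) (sq_nonneg _))
    (fun i _ => mul_nonneg (hP i) (sq_nonneg _)) fun i _ => (by ring : _ = _).le

lemma isLeast_mul_sum_mul_mul {ι : Type*} [Fintype ι] (P h : ι → ℝ) (hP : ∀ i, 0 ≤ P i)
    (hh : ∑ i, P i * h i = 0) (hpos : 0 < ∑ i, P i * h i ^ 2) (c : ℝ) :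
    IsLeast ((fun f : ι → ℝ => c * ∑ i, P i * f i * h i) ''
        {f | ∑ i, P i * f i = 0 ∧ ∑ i, P i * f i ^ 2 = 1})
      (-(|c| * √(∑ i, P i * h i ^ 2))) := by
  set N := √(∑ i, P i * h i ^ 2)
  have hN : 0 < N := sqrt_pos.mpr hpos
  have hN2 : N ^ 2 = ∑ i, P i * h i ^ 2 := sq_sqrt hpos.le
  constructor
  · set σ : ℝ := if 0 ≤ c then -1 else 1
    have hσ2 : σ ^ 2 = 1 := by unfold σ; split_ifs <;> norm_num
    have hcσ : c * σ = -|c| := by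
      unfold σ; split_ifs with hc
      · rw [abs_of_nonneg hc]; ring
      · rw [abs_of_neg (not_le.mp hc)]; ring
    refine ⟨fun i => σ / N * h i, ⟨?_, ?_⟩, ?_⟩
    · calc ∑ i, P i * (σ / N * h i) = σ / N * ∑ i, P i * h i := by
            rw [mul_sum]; exact sum_congr rfl fun i _ => by ring
        _ = 0 := by rw [hh, mul_zero]
    · calc ∑ i, P i * (σ / N * h i) ^ 2 = σ ^ 2 / N ^ 2 * ∑ i, P i * h i ^ 2 := by
            rw [mul_sum]; exact sum_congr rfl fun i _ => by ring
        _ = 1 := by rw [hσ2, ← hN2]; field_simp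
    · calc c * ∑ i, P i * (σ / N * h i) * h i = c * σ / N * ∑ i, P i * h i ^ 2 := by
            rw [mul_sum, mul_sum]; exact sum_congr rfl fun i _ => by ring
        _ = -(|c| * N) := by rw [← hN2, hcσ]; field_simp
  · rintro _ ⟨f, ⟨-, hf⟩, rfl⟩
    have hcs : |∑ i, P i * f i * h i| ≤ N := by
      rw [← sqrt_sq_eq_abs]
      exact sqrt_le_sqrt ((sq_sum_mul_mul_le _ P f h hP).trans_eq (by rw [hf, one_mul]))
    have := abs_mul c (∑ i, P i * f i * h i) ▸ neg_abs_le (c * ∑ i, P i * f i * h i)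
    nlinarith [abs_nonneg c]

lemma sum_mul_sub_sq_of_bool (Q g : Bool → ℝ) (hQ : Q false + Q true = 1) :
    ∑ y, Q y * (g y - ∑ y', Q y' * g y') ^ 2 = Q true * Q false * (g false - g true) ^ 2 := by
  simp only [Fintype.sum_bool]
  rw [eq_sub_of_add_eq hQ]
  ring

lemma sqrt_div_mul_one_sub_sub_sqrt_div_mul {p q : ℝ} (hp : 0 < p) (hq : 0 < q) (hpq : q + p = 1)
    (w : ℝ) : √(p / q) * (1 - w) + -√(q / p) * w = (p - w) / √(p * q) := by
  have hsp := sqrt_pos.mpr hp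
  have hsq := sqrt_pos.mpr hq
  rw [sqrt_div hp.le, sqrt_div hq.le, sqrt_mul hp.le]
  field_simp
  rw [sq_sqrt hp.le, sq_sqrt hq.le]
  linear_combination (-w) * hpq

lemma sum_sum_mul_mul_bool {𝒳 : Type*} [Fintype 𝒳] (P0 f : 𝒳 → ℝ) (W : 𝒳 → Bool → ℝ)
    (hWsum : ∀ x, W x false + W x true = 1) (hf : ∑ x, P0 x * f x = 0) (c : ℝ) (g : Bool → ℝ) :
    ∑ y, (∑ x, P0 x * f x * W x y) * g y
      = (∑ x, P0 x * f x * (c - W x true)) * (g false - g true) := by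
  have hW : ∀ x, W x false = 1 - W x true := fun x => eq_sub_of_add_eq (hWsum x)
  simp only [Fintype.sum_bool, hW, mul_sub, sum_sub_distrib, mul_one, ← sum_mul, hf]
  ring

lemma sqrt_sum_mul_sq_sqrt_div_mul_one_sub {ι : Type*} [Fintype ι] (P w : ι → ℝ) {p q : ℝ}
    (hp : 0 < p) (hq : 0 < q) (hpq : q + p = 1) :
    √(∑ i, P i * (√(p / q) * (1 - w i) + -√(q / p) * w i) ^ 2)
      = √(∑ i, P i * (p - w i) ^ 2) / √(p * q) := by
  simp only [sqrt_div_mul_one_sub_sub_sqrt_div_mul hp hq hpq, div_pow,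
    sq_sqrt (mul_pos hp hq).le, ← mul_div_assoc, ← sum_div]
  exact sqrt_div' _ (mul_pos hp hq).le

lemma setOf_exists_tendsto_eq_image {α β γ : Type*} [TopologicalSpace γ] [T2Space γ]
    {l : Filter β} [l.NeBot] (A B : α → Prop) (F : α → β → γ) (Φ : α → γ)
    (hF : ∀ f, A f → Tendsto (F f) l (𝓝 (Φ f))) :
    {D | ∃ f, A f ∧ B f ∧ Tendsto (F f) l (𝓝 D)} = Φ '' {f | A f ∧ B f} := by
  ext D
  constructor
  · rintro ⟨f, hA, hB, hD⟩
    exact ⟨f, ⟨hA, hB⟩, tendsto_nhds_unique (hF f hA) hD⟩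
  · rintro ⟨f, ⟨hA, hB⟩, rfl⟩
    exact ⟨f, hA, hB, hF f hA⟩

section
variable {𝒳 : Type*} [Fintype 𝒳] (P0 P1 : 𝒳 → ℝ) (W : 𝒳 → Bool → ℝ) (Q0 Q1 : Bool → ℝ)

lemma Lobj_eq (hQ0 : ∀ y, Q0 y = ∑ x, P0 x * W x y) (l1 l2 l3 l4 : ℝ) (f : 𝒳 → ℝ) (ε : ℝ) :
    Lobj P0 P1 W Q0 Q1 l1 l2 l3 l4 f ε =
      l1 * KLdiv (fun x => P0 x + ε * (P0 x * f x)) P0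
        + l2 * KLdiv (fun x => P0 x + ε * (P0 x * f x)) P1
        + l3 * KLdiv (fun y => Q0 y + ε * ∑ x, P0 x * f x * W x y) Q0
        + l4 * KLdiv (fun y => Q0 y + ε * ∑ x, P0 x * f x * W x y) Q1 := by
  have hX : ∀ x, P0 x * (1 + ε * f x) = P0 x + ε * (P0 x * f x) := fun x => by ring
  have hY : ∀ y, ∑ x, (P0 x + ε * (P0 x * f x)) * W x y = Q0 y + ε * ∑ x, P0 x * f x * W x y := by
    intro y
    rw [hQ0, mul_sum, ← sum_add_distrib]
    exact sum_congr rfl fun x _ => by ring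
  simp only [Lobj, hX, hY]

lemma hasDerivAt_Lobj (hP0 : ∀ x, 0 < P0 x) (hP1 : ∀ x, 0 < P1 x)
    (hWsum : ∀ x, W x false + W x true = 1) (hQ0 : ∀ y, Q0 y = ∑ x, P0 x * W x y)
    (hQ0pos : ∀ y, 0 < Q0 y) (hQ1pos : ∀ y, 0 < Q1 y)
    (l1 l2 l3 l4 : ℝ) (f : 𝒳 → ℝ) (hf : ∑ x, P0 x * f x = 0) :
    HasDerivAt (Lobj P0 P1 W Q0 Q1 l1 l2 l3 l4 f)
      (l2 * ∑ x, P0 x * f x * log (P0 x / P1 x)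
        + l4 * ∑ y, (∑ x, P0 x * f x * W x y) * log (Q0 y / Q1 y)) 0 := by
  have hv : ∑ y, ∑ x, P0 x * f x * W x y = 0 := by
    rw [sum_comm, ← hf]
    exact sum_congr rfl fun x _ => by rw [Fintype.sum_bool, ← mul_add, add_comm, hWsum, mul_one]
  rw [funext (Lobj_eq P0 P1 W Q0 Q1 hQ0 l1 l2 l3 l4 f)]
  exact ((((hasDerivAt_KLdiv_self_add_mul P0 _ hP0 hf).const_mul l1).fun_add
    ((hasDerivAt_KLdiv_add_mul P0 P1 _ hP0 hP1 hf).const_mul l2)).fun_add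
    ((hasDerivAt_KLdiv_self_add_mul Q0 _ hQ0pos hv).const_mul l3)).fun_add
    ((hasDerivAt_KLdiv_add_mul Q0 Q1 _ hQ0pos hQ1pos hv).const_mul l4) |>.congr_deriv (by ring)

lemma tendsto_slope_Lobj (hP0 : ∀ x, 0 < P0 x) (hP1 : ∀ x, 0 < P1 x)
    (hWsum : ∀ x, W x false + W x true = 1) (hQ0 : ∀ y, Q0 y = ∑ x, P0 x * W x y)
    (hQ0pos : ∀ y, 0 < Q0 y) (hQ1pos : ∀ y, 0 < Q1 y)
    (l1 l3 l4 : ℝ) (f : 𝒳 → ℝ) (hf : ∑ x, P0 x * f x = 0) :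
    Tendsto (fun ε => (Lobj P0 P1 W Q0 Q1 l1 0 l3 l4 f ε - Lobj P0 P1 W Q0 Q1 l1 0 l3 l4 f 0) / ε)
      (𝓝[>] 0) (𝓝 (l4 * (log (Q0 false / Q1 false) - log (Q0 true / Q1 true))
        * ∑ x, P0 x * f x * (Q0 true - W x true))) := by
  have h := (hasDerivAt_Lobj P0 P1 W Q0 Q1 hP0 hP1 hWsum hQ0 hQ0pos hQ1pos l1 0 l3 l4 f hf)
    |>.tendsto_slope_zero_right
  rw [sum_sum_mul_mul_bool P0 f W hWsum hf (Q0 true)] at h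
  convert h using 2 with ε
  · rw [zero_add, smul_eq_mul, inv_mul_eq_div]
  · ring

end

theorem stmt6_general
    {𝒳 : Type*} [Fintype 𝒳]
    (P0 P1 : 𝒳 → ℝ)
    (hP0pos : ∀ x, 0 < P0 x) (hP0sum : ∑ x, P0 x = 1)
    (hP1pos : ∀ x, 0 < P1 x)
    (W : 𝒳 → Bool → ℝ)
    (hWsum : ∀ x, W x false + W x true = 1)
    (Q0 Q1 : Bool → ℝ)
    (hQ0 : ∀ y, Q0 y = ∑ x, P0 x * W x y)
    (hQ0pos : ∀ y, 0 < Q0 y) (hQ1pos : ∀ y, 0 < Q1 y)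
    (l1 l2 l3 l4 : ℝ)
    (hl2 : l2 = 0) (hl4 : 0 ≤ l4)
    (gm : Bool → ℝ)
    (hgmf : gm false = Real.sqrt (Q0 true / (1 - Q0 true)))
    (hgmt : gm true = -Real.sqrt ((1 - Q0 true) / Q0 true))
    (ρm : ℝ)
    (hρm : ρm = Real.sqrt (∑ x, P0 x * (gm false * W x false + gm true * W x true) ^ 2))
    (hρmpos : 0 < ρm) :
    IsLeast
      {D : ℝ | ∃ f : 𝒳 → ℝ,
        (∑ x, P0 x * f x = 0) ∧ (∑ x, P0 x * f x ^ 2 = 1) ∧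
        Tendsto
          (fun ε : ℝ =>
            (Lobj P0 P1 W Q0 Q1 l1 l2 l3 l4 f ε
              - Lobj P0 P1 W Q0 Q1 l1 l2 l3 l4 f 0) / ε)
          (nhdsWithin 0 (Set.Ioi 0)) (nhds D)}
      (-(l4 * ρm *
        Real.sqrt (∑ y, Q0 y *
          (Real.log (Q0 y / Q1 y) - ∑ y', Q0 y' * Real.log (Q0 y' / Q1 y')) ^ 2))) := by
  subst hl2
  set c := l4 * (log (Q0 false / Q1 false) - log (Q0 true / Q1 true))
  set h : 𝒳 → ℝ := fun x => Q0 true - W x true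
  have hQ0sum : Q0 false + Q0 true = 1 := by
    rw [hQ0, hQ0, ← sum_add_distrib, ← hP0sum]
    exact sum_congr rfl fun x _ => by rw [← mul_add, hWsum, mul_one]
  have hp := hQ0pos true
  have hq := hQ0pos false
  have hh : ∑ x, P0 x * h x = 0 := by
    simp only [h, mul_sub, sum_sub_distrib, ← sum_mul, hP0sum, one_mul, ← hQ0, sub_self]
  have hρ : ρm = √(∑ x, P0 x * h x ^ 2) / √(Q0 true * Q0 false) := by
    simp only [hρm, hgmf, hgmt, eq_sub_of_add_eq (hWsum _), ← eq_sub_of_add_eq hQ0sum]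
    exact sqrt_sum_mul_sq_sqrt_div_mul_one_sub P0 _ hp hq hQ0sum
  have hpos : 0 < ∑ x, P0 x * h x ^ 2 :=
    sqrt_pos.mp ((div_pos_iff_of_pos_right (by positivity)).mp (hρ ▸ hρmpos))
  have hvalue : l4 * ρm * √(∑ y, Q0 y *
      (log (Q0 y / Q1 y) - ∑ y', Q0 y' * log (Q0 y' / Q1 y')) ^ 2)
      = |c| * √(∑ x, P0 x * h x ^ 2) := by
    rw [sum_mul_sub_sq_of_bool Q0 _ hQ0sum, sqrt_mul (by positivity), sqrt_sq_eq_abs, hρ,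
      abs_mul, abs_of_nonneg hl4]
    field_simp
  convert isLeast_mul_sum_mul_mul P0 h (fun x => (hP0pos x).le) hh hpos c using 1
  · exact setOf_exists_tendsto_eq_image _ _ _ _ fun f hf =>
      tendsto_slope_Lobj P0 P1 W Q0 Q1 hP0pos hP1pos hWsum hQ0 hQ0pos hQ1pos l1 l3 l4 f hf
  · rw [hvalue]

/-- Corollary 2 of the paper: if `λ₂ = 0`, then the minimum of
`Δ_λ(f) = lim_{ε→0⁺}(L_λ(P̃_{X|S=0}) − L_λ(P_{X|S=0}))/ε` over all `f ∈ 𝓛(P_{X|S=0})`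
equals `−λ₄·ρ_m·√(Var[log(P_{Y|S=0}(Y)/P_{Y|S=1}(Y))|S=0])`, stated as: this value is the
least element of the set of achieved limit values `Δ_λ(f)`, `f ∈ 𝓛(P_{X|S=0})`.
Here the variance under `P_{Y|S=0} = Q0` is
`Var[ℓ(Y)|S=0] = ∑ y, Q0(y)·(ℓ(y) − ∑ y', Q0(y')·ℓ(y'))²` with `ℓ(y) = log(Q0(y)/Q1(y))`.
Setup (`𝒴 = Bool`, channel `W`, `P0/P1/Q0/Q1` full support, `g_m`, `ρ_m`) as in the paper. -/
theorem stmt6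
    {𝒳 : Type*} [Fintype 𝒳]
    (P0 P1 : 𝒳 → ℝ)
    (hP0pos : ∀ x, 0 < P0 x) (hP0sum : ∑ x, P0 x = 1)
    (hP1pos : ∀ x, 0 < P1 x) (hP1sum : ∑ x, P1 x = 1)
    (W : 𝒳 → Bool → ℝ)
    (hWnn : ∀ x y, 0 ≤ W x y) (hWsum : ∀ x, W x false + W x true = 1)
    (Q0 Q1 : Bool → ℝ)
    (hQ0 : ∀ y, Q0 y = ∑ x, P0 x * W x y) (hQ1 : ∀ y, Q1 y = ∑ x, P1 x * W x y)
    (hQ0pos : ∀ y, 0 < Q0 y) (hQ1pos : ∀ y, 0 < Q1 y)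
    (l1 l2 l3 l4 : ℝ)
    (hl1 : 0 ≤ l1) (hl2 : l2 = 0) (hl3 : 0 ≤ l3) (hl4 : 0 ≤ l4)
    (hp1 : Q0 true < 1)
    (gm : Bool → ℝ)
    (hgmf : gm false = Real.sqrt (Q0 true / (1 - Q0 true)))
    (hgmt : gm true = -Real.sqrt ((1 - Q0 true) / Q0 true))
    (ρm : ℝ)
    (hρm : ρm = Real.sqrt (∑ x, P0 x * (gm false * W x false + gm true * W x true) ^ 2))
    (hρmpos : 0 < ρm) :
    IsLeast
      {D : ℝ | ∃ f : 𝒳 → ℝ,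
        (∑ x, P0 x * f x = 0) ∧ (∑ x, P0 x * f x ^ 2 = 1) ∧
        Tendsto
          (fun ε : ℝ =>
            (Lobj P0 P1 W Q0 Q1 l1 l2 l3 l4 f ε
              - Lobj P0 P1 W Q0 Q1 l1 l2 l3 l4 f 0) / ε)
          (nhdsWithin 0 (Set.Ioi 0)) (nhds D)}
      (-(l4 * ρm *
        Real.sqrt (∑ y, Q0 y *
          (Real.log (Q0 y / Q1 y) - ∑ y', Q0 y' * Real.log (Q0 y' / Q1 y')) ^ 2))) :=
  stmt6_general P0 P1 hP0pos hP0sum hP1pos W hWsum Q0 Q1 hQ0 hQ0pos hQ1pos l1 l2 l3 l4 hl2 hl4 gm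
    hgmf hgmt ρm hρm hρmpos
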